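/- There is a group isomorphism from the group with presentation ⟨σ₁, σ₂ ∣ (σ₁σ₂)³ = (σ₂σ₁)³, (σ₁σ₂)³ = 1⟩ (the quotient of the braid group of type G₂ by its center) to the free product ℤ * ℤ/3ℤ which sends σ₁ to x and σ₂ to x⁻¹y, where x denotes the generator of the factor ℤ and y the generator of the factor ℤ/3ℤ. -/

import Mathlib

/-- Relators of the quotient of the braid group of type `G₂` by its center:
`(σ₁σ₂)³(σ₂σ₁)⁻³` and `(σ₁σ₂)³`. -/
def G2QuotRels : Set (FreeGroup (Fin 2)) :=
  { (FreeGroup.of 0 * FreeGroup.of 1) ^ 3 * ((FreeGroup.of 1 * FreeGroup.of 0) ^ 3)⁻¹,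
    (FreeGroup.of 0 * FreeGroup.of 1) ^ 3 }

/-!
The first relator is a consequence of the second, since `(σ₂σ₁)³` is conjugate to `(σ₁σ₂)³`; so the
group is `⟨σ₁, σ₂ ∣ (σ₁σ₂)³⟩`. In the generators `x = σ₁`, `y = σ₁σ₂` this is `⟨x, y ∣ y³⟩ ≅ ℤ * ℤ/3ℤ`,
and `σ₂ = x⁻¹y`.
-/

open Monoid

theorem mul_pow_eq_one_comm {M : Type*} [LeftCancelMonoid M] {a b : M} {n : ℕ}
    (h : (a * b) ^ n = 1) : (b * a) ^ n = 1 :=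
  mul_left_cancel (a := a) <| by rw [← mul_pow_mul, h, one_mul, mul_one]

section ZModHom

variable {n : ℕ} {G : Type*} [Group G]

def zmodPowersHom (g : G) (hg : g ^ n = 1) : Multiplicative (ZMod n) →* G :=
  AddMonoidHom.toMultiplicativeLeft <|
    ZMod.lift n ⟨zmultiplesHom (Additive G) (.ofMul g), by
      rw [zmultiplesHom_apply, natCast_zsmul, ← ofMul_pow, hg, ofMul_one]⟩

@[simp]
theorem zmodPowersHom_ofAdd_one (g : G) (hg : g ^ n = 1) :
    zmodPowersHom g hg (.ofAdd 1) = g := by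
  rw [zmodPowersHom, AddMonoidHom.toMultiplicativeLeft_apply_apply, toAdd_ofAdd,
    ← Int.cast_one, ZMod.lift_coe, zmultiplesHom_apply, one_zsmul, toMul_ofMul]

theorem MonoidHom.ext_mzmod {f g : Multiplicative (ZMod n) →* G}
    (h : f (.ofAdd 1) = g (.ofAdd 1)) : f = g := by
  refine MonoidHom.ext fun m => ?_
  obtain ⟨k, hk⟩ := ZMod.intCast_surjective m.toAdd
  rw [← ofAdd_toAdd m, ← hk, ← zsmul_one, ofAdd_zsmul, map_zpow, map_zpow, h]

end ZModHom

namespace G2Quot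

abbrev FreeProd := Coprod (Multiplicative ℤ) (Multiplicative (ZMod 3))

abbrev x : FreeProd := Coprod.inl (.ofAdd 1)

abbrev y : FreeProd := Coprod.inr (.ofAdd 1)

theorem y_pow_three : y ^ 3 = 1 := by
  rw [y, ← map_pow, ← ofAdd_nsmul, show (3 • 1 : ZMod 3) = 0 from rfl, ofAdd_zero, map_one]

theorem lift_eq_one_of_mem {G : Type*} [Group G] {f : Fin 2 → G} (hf : (f 0 * f 1) ^ 3 = 1) :
    ∀ r ∈ G2QuotRels, FreeGroup.lift f r = 1 := by
  rintro r (rfl | rfl) <;> simp [hf, mul_pow_eq_one_comm hf]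

def toFreeProd : PresentedGroup G2QuotRels →* FreeProd :=
  PresentedGroup.toGroup (f := ![x, x⁻¹ * y]) <| lift_eq_one_of_mem <| by
    simpa using y_pow_three

theorem toFreeProd_of_zero : toFreeProd (.of 0) = x := PresentedGroup.toGroup.of _

theorem toFreeProd_of_one : toFreeProd (.of 1) = x⁻¹ * y := PresentedGroup.toGroup.of _

theorem of_mul_of_pow_three : (.of 0 * .of 1 : PresentedGroup G2QuotRels) ^ 3 = 1 :=
  PresentedGroup.one_of_mem (Or.inr rfl)

def ofFreeProd : FreeProd →* PresentedGroup G2QuotRels :=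
  Coprod.lift (zpowersHom _ (.of 0)) (zmodPowersHom _ of_mul_of_pow_three)

theorem ofFreeProd_comp_toFreeProd : ofFreeProd.comp toFreeProd = .id _ := by
  refine PresentedGroup.ext fun i => ?_
  fin_cases i <;> simp [toFreeProd_of_zero, toFreeProd_of_one, ofFreeProd]

theorem toFreeProd_comp_ofFreeProd : toFreeProd.comp ofFreeProd = .id _ := by
  refine Coprod.hom_ext (MonoidHom.ext_mint ?_) (MonoidHom.ext_mzmod ?_) <;>
    simp [ofFreeProd, toFreeProd_of_zero, toFreeProd_of_one]

end G2Quot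

open Monoid in
theorem stmt_5 :
    ∃ e : PresentedGroup G2QuotRels ≃* Coprod (Multiplicative ℤ) (Multiplicative (ZMod 3)),
      e (PresentedGroup.of 0) = Coprod.inl (Multiplicative.ofAdd (1 : ℤ)) ∧
      e (PresentedGroup.of 1) =
        (Coprod.inl (Multiplicative.ofAdd (1 : ℤ)))⁻¹ *
          Coprod.inr (Multiplicative.ofAdd (1 : ZMod 3)) :=
  ⟨G2Quot.toFreeProd.toMulEquiv G2Quot.ofFreeProd G2Quot.ofFreeProd_comp_toFreeProd
      G2Quot.toFreeProd_comp_ofFreeProd,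
    G2Quot.toFreeProd_of_zero, G2Quot.toFreeProd_of_one⟩
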